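/- There exists exactly one formal power series u(x) with rational coefficients and constant coefficient 0 satisfying the equation u(x) = x·(u(x) + 1)^4. Moreover, all coefficients of u are non-negative, and its coefficients of x, x², x³, x⁴, x⁵, x⁶ are respectively 1, 4, 22, 140, 969, 7084. -/

import Mathlib

open PowerSeries Finset

namespace QuarticTreeAux

noncomputable def f (u : PowerSeries ℚ) : PowerSeries ℚ := PowerSeries.X * (u + 1) ^ 4

/-- Contraction property. -/
lemma key {u v : PowerSeries ℚ} {n : ℕ} (h : (PowerSeries.X : PowerSeries ℚ) ^ n ∣ u - v) :
    (PowerSeries.X : PowerSeries ℚ) ^ (n + 1) ∣ f u - f v := by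
  have hfact : f u - f v = PowerSeries.X * ((u - v) *
      ((u+1)^3 + (u+1)^2*(v+1) + (u+1)*(v+1)^2 + (v+1)^3)) := by
    unfold f; ring
  rw [hfact, pow_succ, mul_comm (PowerSeries.X ^ n) PowerSeries.X]
  exact mul_dvd_mul_left PowerSeries.X (h.mul_right _)

noncomputable def g : ℕ → PowerSeries ℚ
  | 0 => 0
  | (k+1) => f (g k)

lemma gsucc (n : ℕ) : (PowerSeries.X : PowerSeries ℚ) ^ n ∣ g (n+1) - g n := by
  induction n with
  | zero => simp
  | succ n ih => exact key ih

lemma gstab {n m : ℕ} (h : n ≤ m) : (PowerSeries.X : PowerSeries ℚ) ^ n ∣ g m - g n := by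
  induction m with
  | zero => simp_all
  | succ m ih =>
    rcases Nat.lt_or_ge n (m+1) with h' | h'
    · have h1 : n ≤ m := Nat.lt_succ_iff.mp h'
      have := ih h1
      have h2 : (PowerSeries.X : PowerSeries ℚ) ^ n ∣ g (m+1) - g m :=
        dvd_trans (pow_dvd_pow _ h1) (gsucc m)
      have := dvd_add h2 this
      simpa using this
    · have : n = m+1 := le_antisymm h h'
      simp [this]

noncomputable def U : PowerSeries ℚ := PowerSeries.mk fun n => PowerSeries.coeff n (g (n+1))

lemma claimB (n : ℕ) : (PowerSeries.X : PowerSeries ℚ) ^ n ∣ U - g n := by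
  rw [PowerSeries.X_pow_dvd_iff]
  intro m hm
  have h1 : (PowerSeries.X : PowerSeries ℚ) ^ (m+1) ∣ g n - g (m+1) := gstab hm
  have h2 : PowerSeries.coeff m (g n) = PowerSeries.coeff m (g (m+1)) := by
    have := PowerSeries.X_pow_dvd_iff.mp h1 m (Nat.lt_succ_self m)
    have := sub_eq_zero.mp (by simpa using this)
    simpa [map_sub, sub_eq_zero] using this
  simp [U, PowerSeries.coeff_mk, map_sub, h2]

lemma eq_zero_of_forall_dvd {w : PowerSeries ℚ}
    (h : ∀ n, (PowerSeries.X : PowerSeries ℚ) ^ n ∣ w) : w = 0 := by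
  ext n
  simpa using PowerSeries.X_pow_dvd_iff.mp (h (n+1)) n (Nat.lt_succ_self n)

lemma U_fixed : U = f U := by
  have h : ∀ n, (PowerSeries.X : PowerSeries ℚ) ^ n ∣ U - f U := by
    intro n
    have h1 : (PowerSeries.X : PowerSeries ℚ) ^ (n+1) ∣ f U - f (g n) := key (claimB n)
    have h2 : (PowerSeries.X : PowerSeries ℚ) ^ (n+1) ∣ U - g (n+1) := claimB (n+1)
    have h3 : (PowerSeries.X : PowerSeries ℚ) ^ (n+1) ∣ U - f U := by
      have := dvd_sub h2 h1
      have heq : U - g (n+1) - (f U - f (g n)) = U - f U := by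
        simp only [g]; ring
      rwa [heq] at this
    exact dvd_trans (pow_dvd_pow _ (Nat.le_succ n)) h3
  have := eq_zero_of_forall_dvd h
  linear_combination this

lemma uniq {u v : PowerSeries ℚ} (hu : u = f u) (hv : v = f v) : u = v := by
  have h : ∀ n, (PowerSeries.X : PowerSeries ℚ) ^ n ∣ u - v := by
    intro n
    induction n with
    | zero => simp
    | succ n ih =>
      have := key ih
      rwa [← hu, ← hv] at this
  have := eq_zero_of_forall_dvd h
  linear_combination this

/-- nonneg for products, bounded version -/
lemma mul_coeff_nonneg {φ ψ : PowerSeries ℚ} {m : ℕ}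
    (hφ : ∀ k ≤ m, 0 ≤ PowerSeries.coeff k φ) (hψ : ∀ k ≤ m, 0 ≤ PowerSeries.coeff k ψ) :
    ∀ k ≤ m, 0 ≤ PowerSeries.coeff k (φ * ψ) := by
  intro k hk
  rw [PowerSeries.coeff_mul]
  refine Finset.sum_nonneg fun p hp => mul_nonneg (hφ _ ?_) (hψ _ ?_)
  · exact le_trans (Finset.HasAntidiagonal.antidiagonal.fst_le hp) hk
  · exact le_trans (Finset.HasAntidiagonal.antidiagonal.snd_le hp) hk

end QuarticTreeAux



/-- There is exactly one formal power series `u(x) ∈ ℚ⟦x⟧` with constant coefficient 0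
satisfying `u = x·(u+1)⁴`; its coefficients are non-negative, and the coefficients of
`x, x², x³, x⁴, x⁵, x⁶` are `1, 4, 22, 140, 969, 7084`. -/
theorem quartic_tree_series :
    (∃! u : PowerSeries ℚ, PowerSeries.constantCoeff u = 0 ∧
        u = PowerSeries.X * (u + 1) ^ 4) ∧
    (∀ u : PowerSeries ℚ, PowerSeries.constantCoeff u = 0 →
        u = PowerSeries.X * (u + 1) ^ 4 →
      (∀ n : ℕ, 0 ≤ PowerSeries.coeff n u) ∧
      PowerSeries.coeff 1 u = 1 ∧
      PowerSeries.coeff 2 u = 4 ∧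
      PowerSeries.coeff 3 u = 22 ∧
      PowerSeries.coeff 4 u = 140 ∧
      PowerSeries.coeff 5 u = 969 ∧
      PowerSeries.coeff 6 u = 7084) := by
  open QuarticTreeAux in
  constructor
  · refine ⟨U, ⟨?_, ?_⟩, ?_⟩
    · rw [U_fixed]; simp [f]
    · exact U_fixed
    · rintro v ⟨-, hv⟩
      exact uniq hv U_fixed
  · intro u h0 hu
    have hmul : ∀ (φ ψ : PowerSeries ℚ) (n : ℕ), PowerSeries.coeff n (φ*ψ) =
        ∑ k ∈ Finset.range (n+1), PowerSeries.coeff k φ * PowerSeries.coeff (n-k) ψ := by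
      intro φ ψ n
      rw [PowerSeries.coeff_mul, Finset.Nat.sum_antidiagonal_eq_sum_range_succ_mk]
    have hexp : (u+1)^4 = ((u*u)*(u*u)) + 4*((u*u)*u) + 6*(u*u) + 4*u + 1 := by ring
    have hr : ∀ n : ℕ, PowerSeries.coeff (n+1) u =
        PowerSeries.coeff n ((u*u)*(u*u)) + 4 * PowerSeries.coeff n ((u*u)*u)
        + 6 * PowerSeries.coeff n (u*u) + 4 * PowerSeries.coeff n u
        + PowerSeries.coeff n 1 := by
      intro n
      conv_lhs => rw [hu]
      rw [PowerSeries.coeff_succ_X_mul, hexp]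
      have c4 : (4:PowerSeries ℚ) = PowerSeries.C 4 := by
        simp [map_ofNat]
      have c6 : (6:PowerSeries ℚ) = PowerSeries.C 6 := by
        simp [map_ofNat]
      rw [map_add, map_add, map_add, map_add, c4, c6, PowerSeries.coeff_C_mul,
        PowerSeries.coeff_C_mul, PowerSeries.coeff_C_mul]
    have ha0 : PowerSeries.coeff 0 u = 0 := by
      rw [PowerSeries.coeff_zero_eq_constantCoeff]; exact h0
    have ha1 : PowerSeries.coeff 1 u = 1 := by
      rw [hr 0]; simp [hmul, Finset.sum_range_succ, ha0]
    have ha2 : PowerSeries.coeff 2 u = 4 := by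
      rw [hr 1]; simp [hmul, Finset.sum_range_succ, ha0, ha1]
    have ha3 : PowerSeries.coeff 3 u = 22 := by
      rw [hr 2]; simp [hmul, Finset.sum_range_succ, ha0, ha1, ha2]; norm_num
    have ha4 : PowerSeries.coeff 4 u = 140 := by
      rw [hr 3]; simp [hmul, Finset.sum_range_succ, ha0, ha1, ha2, ha3]; norm_num
    have ha5 : PowerSeries.coeff 5 u = 969 := by
      rw [hr 4]; simp [hmul, Finset.sum_range_succ, ha0, ha1, ha2, ha3, ha4]; norm_num
    have ha6 : PowerSeries.coeff 6 u = 7084 := by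
      rw [hr 5]; simp [hmul, Finset.sum_range_succ, ha0, ha1, ha2, ha3, ha4, ha5]; norm_num
    refine ⟨?_, ha1, ha2, ha3, ha4, ha5, ha6⟩
    intro n
    induction n using Nat.strong_induction_on with
    | _ n ih =>
      match n with
      | 0 => simp [ha0]
      | (m+1) =>
        have hw : ∀ k ≤ m, 0 ≤ PowerSeries.coeff k u :=
          fun k hk => ih k (Nat.lt_succ_of_le hk)
        have h2 := mul_coeff_nonneg hw hw
        have h3 := mul_coeff_nonneg h2 hw
        have h4 := mul_coeff_nonneg h2 h2
        rw [hr m]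
        have hone : (0:ℚ) ≤ PowerSeries.coeff m 1 := by
          rw [PowerSeries.coeff_one]; positivity
        have := h2 m le_rfl
        have := h4 m le_rfl
        have := h3 m le_rfl
        have := hw m le_rfl
        positivity
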